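/- Equal total incremental error for two groups: let A ∈ ℝ^{a×n}, B ∈ ℝ^{b×n}, set A^{(1)} = A, B^{(1)} = B, and for r = 1, …, d let v_r ∈ ℝ^n be a unit vector minimizing u ↦ max(h_{A^{(r)}}(u), h_{B^{(r)}}(u)) over the unit sphere, with A^{(r+1)} = A^{(r)}(I − v_r v_rᵀ) and B^{(r+1)} = B^{(r)}(I − v_r v_rᵀ). Then the total incremental errors of the two groups are equal: Σ_{r=1}^d [λmax(A^{(r)ᵀ}A^{(r)}) − v_rᵀ A^{(r)ᵀ}A^{(r)} v_r] = Σ_{r=1}^d [λmax(B^{(r)ᵀ}B^{(r)}) − v_rᵀ B^{(r)ᵀ}B^{(r)} v_r]. -/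

import Mathlib

/-!
The sums agree term by term: if a unit vector `v` minimizes `max (h_S u) (h_T u)` over the unit
sphere, then `h_S v = h_T v`. Otherwise, say `h_S v > h_T v ≥ 0`, so `v` does not maximize the
quadratic form of `S`. Writing a better unit vector as `w = p v + z` with `z ⊥ v`, the Rayleigh
quotient of `S` along `v + t z` exceeds its value at `v` for arbitrarily small `t`, while by
continuity `h_T` stays below `h_S v`; normalizing such a vector lowers the maximum.
-/

open Matrix

/-- The largest eigenvalue of a real symmetric matrix, via its Rayleigh-quotient
characterization: `λmax(M) = sup { vᵀ M v : ‖v‖ = 1 }`. -/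
noncomputable def lamMax {n : ℕ} (M : Matrix (Fin n) (Fin n) ℝ) : ℝ :=
  sSup {r : ℝ | ∃ v : Fin n → ℝ, v ⬝ᵥ v = 1 ∧ r = v ⬝ᵥ (M *ᵥ v)}

/-- The rank-1 fair loss `h_M(v) = λmax(MᵀM) − vᵀ(MᵀM)v`. -/
noncomputable def fairLoss {m n : ℕ} (M : Matrix (Fin m) (Fin n) ℝ) (v : Fin n → ℝ) : ℝ :=
  lamMax (Mᵀ * M) - v ⬝ᵥ ((Mᵀ * M) *ᵥ v)

open Filter Topology

section Rayleigh

variable {ι : Type*} [Fintype ι]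

lemma dotProduct_self_nonneg (x : ι → ℝ) : 0 ≤ x ⬝ᵥ x :=
  Finset.sum_nonneg fun i _ => mul_self_nonneg (x i)

lemma isCompact_setOf_dotProduct_self_eq_one : IsCompact {v : ι → ℝ | v ⬝ᵥ v = 1} := by
  refine Metric.isCompact_of_isClosed_isBounded (isClosed_eq (by fun_prop) continuous_const) ?_
  refine (Metric.isBounded_closedBall (x := 0) (r := 1)).subset fun v hv => ?_
  rw [mem_closedBall_zero_iff, pi_norm_le_iff_of_nonneg zero_le_one]
  intro i
  have hi : v i * v i ≤ v ⬝ᵥ v :=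
    Finset.single_le_sum (f := fun k => v k * v k) (fun k _ => mul_self_nonneg (v k))
      (Finset.mem_univ i)
  rw [Real.norm_eq_abs, ← abs_one, ← sq_le_sq, sq, one_pow]
  exact hi.trans_eq hv

lemma quadratic_add_smul (M : Matrix ι ι ℝ) (x y : ι → ℝ) (t : ℝ) :
    (x + t • y) ⬝ᵥ (M *ᵥ (x + t • y)) =
      x ⬝ᵥ (M *ᵥ x) + (x ⬝ᵥ (M *ᵥ y) + y ⬝ᵥ (M *ᵥ x)) * t + y ⬝ᵥ (M *ᵥ y) * t ^ 2 := by
  simp only [mulVec_add, mulVec_smul, dotProduct_add, add_dotProduct, dotProduct_smul,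
    smul_dotProduct, smul_eq_mul]
  ring

lemma quadratic_smul (M : Matrix ι ι ℝ) (x : ι → ℝ) (s : ℝ) :
    (s • x) ⬝ᵥ (M *ᵥ (s • x)) = s ^ 2 * x ⬝ᵥ (M *ᵥ x) := by
  simp only [mulVec_smul, dotProduct_smul, smul_dotProduct, smul_eq_mul]
  ring

noncomputable def rayleigh (M : Matrix ι ι ℝ) (x : ι → ℝ) : ℝ :=
  x ⬝ᵥ (M *ᵥ x) / (x ⬝ᵥ x)

lemma rayleigh_of_dotProduct_self_eq_one (M : Matrix ι ι ℝ) {v : ι → ℝ} (hv : v ⬝ᵥ v = 1) :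
    rayleigh M v = v ⬝ᵥ (M *ᵥ v) := by
  rw [rayleigh, hv, div_one]

lemma continuousAt_rayleigh (M : Matrix ι ι ℝ) {x : ι → ℝ} (hx : x ≠ 0) :
    ContinuousAt (rayleigh M) x :=
  ContinuousAt.div (by fun_prop) (by fun_prop) (mt dotProduct_self_eq_zero.1 hx)

lemma exists_dotProduct_self_eq_one_quadratic_eq_rayleigh {x : ι → ℝ} (hx : x ≠ 0) :
    ∃ u : ι → ℝ, u ⬝ᵥ u = 1 ∧ ∀ M : Matrix ι ι ℝ, u ⬝ᵥ (M *ᵥ u) = rayleigh M x := by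
  have hxx : x ⬝ᵥ x ≠ 0 := mt dotProduct_self_eq_zero.1 hx
  have hsq : (√(x ⬝ᵥ x))⁻¹ ^ 2 = (x ⬝ᵥ x)⁻¹ := by
    rw [inv_pow, Real.sq_sqrt (dotProduct_self_nonneg x)]
  refine ⟨(√(x ⬝ᵥ x))⁻¹ • x, ?_, fun M => ?_⟩
  · rw [smul_dotProduct, dotProduct_smul, smul_eq_mul, smul_eq_mul, ← mul_assoc, ← sq, hsq,
      inv_mul_cancel₀ hxx]
  · rw [quadratic_smul, hsq, rayleigh, inv_mul_eq_div]

end Rayleigh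

lemma frequently_pos_linear_add_quadratic {c D : ℝ} (h : c = 0 → 0 < D) :
    ∃ᶠ t in 𝓝 (0 : ℝ), 0 < c * t + D * t ^ 2 := by
  by_cases hc : c = 0
  · refine (eventually_nhdsWithin_of_forall (s := {0}ᶜ) fun t ht => ?_).frequently.filter_mono
      nhdsWithin_le_nhds
    rw [hc, zero_mul, zero_add]
    exact mul_pos (h hc) (sq_pos_of_ne_zero ht)
  · have hlim : Tendsto (fun s => c * s) (𝓝[>] 0) (𝓝 0) :=
      ((continuous_const_mul c).tendsto' 0 0 (mul_zero c)).mono_left nhdsWithin_le_nhds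
    have hfactor : ∀ᶠ s in 𝓝 (0 : ℝ), 0 < 1 + D * s :=
      continuousAt_const.eventually_lt (g := fun s => 1 + D * s) (by fun_prop) (by simp)
    refine hlim.frequently (Eventually.frequently ?_)
    filter_upwards [self_mem_nhdsWithin, nhdsWithin_le_nhds hfactor] with s (hs : 0 < s) hD
    have hc2 : 0 < c ^ 2 := sq_pos_of_ne_zero hc
    rw [show c * (c * s) + D * (c * s) ^ 2 = c ^ 2 * s * (1 + D * s) by ring]
    positivity

section LamMax

variable {n : ℕ}

lemma bddAbove_quadratic_unit (M : Matrix (Fin n) (Fin n) ℝ) :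
    BddAbove {r : ℝ | ∃ v : Fin n → ℝ, v ⬝ᵥ v = 1 ∧ r = v ⬝ᵥ (M *ᵥ v)} := by
  have hset : {r : ℝ | ∃ v : Fin n → ℝ, v ⬝ᵥ v = 1 ∧ r = v ⬝ᵥ (M *ᵥ v)} =
      (fun v => v ⬝ᵥ (M *ᵥ v)) '' {v | v ⬝ᵥ v = 1} := by
    ext r
    simp [eq_comm]
  rw [hset]
  exact isCompact_setOf_dotProduct_self_eq_one.bddAbove_image (by fun_prop)

lemma quadratic_le_lamMax (M : Matrix (Fin n) (Fin n) ℝ) {v : Fin n → ℝ} (hv : v ⬝ᵥ v = 1) :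
    v ⬝ᵥ (M *ᵥ v) ≤ lamMax M :=
  le_csSup (bddAbove_quadratic_unit M) ⟨v, hv, rfl⟩

lemma exists_quadratic_gt_of_lt_lamMax (M : Matrix (Fin n) (Fin n) ℝ) {v : Fin n → ℝ}
    (hv : v ⬝ᵥ v = 1) (h : v ⬝ᵥ (M *ᵥ v) < lamMax M) :
    ∃ w : Fin n → ℝ, w ⬝ᵥ w = 1 ∧ v ⬝ᵥ (M *ᵥ v) < w ⬝ᵥ (M *ᵥ w) := by
  rw [lamMax] at h
  obtain ⟨_, ⟨w, hw, rfl⟩, hlt⟩ := exists_lt_of_lt_csSup (by exact ⟨_, v, hv, rfl⟩) h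
  exact ⟨w, hw, hlt⟩

lemma frequently_quadratic_lt_rayleigh (M : Matrix (Fin n) (Fin n) ℝ) {v : Fin n → ℝ}
    (hv : v ⬝ᵥ v = 1) (h : v ⬝ᵥ (M *ᵥ v) < lamMax M) :
    ∃ᶠ x in 𝓝 v, v ⬝ᵥ (M *ᵥ v) < rayleigh M x := by
  obtain ⟨w, hw, hlt⟩ := exists_quadratic_gt_of_lt_lamMax M hv h
  set p := v ⬝ᵥ w
  set z := w - p • v
  have hwz : w = z + p • v := by simp [z]
  have hvz : v ⬝ᵥ z = 0 := by simp [z, dotProduct_sub, hv, p]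
  have hzv : z ⬝ᵥ v = 0 := by rw [dotProduct_comm, hvz]
  set a := v ⬝ᵥ (M *ᵥ v)
  set b := z ⬝ᵥ (M *ᵥ z)
  set c := v ⬝ᵥ (M *ᵥ z) + z ⬝ᵥ (M *ᵥ v)
  set Q := z ⬝ᵥ z
  have hQ : Q = 1 - p ^ 2 := by
    have hww := quadratic_add_smul 1 z v p
    rw [← hwz] at hww
    simp only [one_mulVec, hw, hzv, hvz, hv] at hww
    linarith
  have hD : c = 0 → 0 < b - Q * a := by
    intro hc
    have hww : w ⬝ᵥ (M *ᵥ w) = b + c * p + a * p ^ 2 := by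
      rw [hwz, quadratic_add_smul]
      simp only [a, b, c]
      ring
    rw [hww, hc] at hlt
    rw [hQ]
    linarith
  have hR : ∀ t : ℝ, rayleigh M (v + t • z) = (a + c * t + b * t ^ 2) / (1 + Q * t ^ 2) := by
    intro t
    have hnorm := quadratic_add_smul 1 v z t
    simp only [one_mulVec, hv, hvz, hzv, add_zero] at hnorm
    rw [rayleigh, quadratic_add_smul, hnorm, zero_mul, add_zero]
  have hpath : Tendsto (fun t : ℝ => v + t • z) (𝓝 0) (𝓝 v) :=
    Continuous.tendsto' (by fun_prop) 0 v (by simp)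
  refine hpath.frequently ((frequently_pos_linear_add_quadratic hD).mono fun t ht => ?_)
  have hQ0 : 0 ≤ Q := dotProduct_self_nonneg z
  rw [hR, lt_div_iff₀ (by positivity)]
  linear_combination ht

lemma lamMax_sub_quadratic_le_of_isMinOn (S T : Matrix (Fin n) (Fin n) ℝ) {v : Fin n → ℝ}
    (hv : v ⬝ᵥ v = 1)
    (hmin : IsMinOn (fun u => max (lamMax S - u ⬝ᵥ (S *ᵥ u)) (lamMax T - u ⬝ᵥ (T *ᵥ u)))
      {u | u ⬝ᵥ u = 1} v) :
    lamMax S - v ⬝ᵥ (S *ᵥ v) ≤ lamMax T - v ⬝ᵥ (T *ᵥ v) := by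
  by_contra! hlt
  have hS : v ⬝ᵥ (S *ᵥ v) < lamMax S := by linarith [quadratic_le_lamMax T hv]
  have hv0 : v ≠ 0 := by rintro rfl; simp at hv
  have hT : ∀ᶠ x in 𝓝 v, lamMax T - rayleigh T x < lamMax S - v ⬝ᵥ (S *ᵥ v) :=
    ContinuousAt.eventually_lt (f := fun x => lamMax T - rayleigh T x)
      (continuousAt_const.sub (continuousAt_rayleigh T hv0)) continuousAt_const
      (by rwa [rayleigh_of_dotProduct_self_eq_one T hv])
  obtain ⟨x, hxS, hxT, hx0⟩ := ((frequently_quadratic_lt_rayleigh S hv hS).and_eventually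
    (hT.and (eventually_ne_nhds hv0))).exists
  obtain ⟨u, hu, hquad⟩ := exists_dotProduct_self_eq_one_quadratic_eq_rayleigh hx0
  have hle := isMinOn_iff.1 hmin u hu
  simp only [hquad, max_eq_left hlt.le] at hle
  exact lt_irrefl _ (hle.trans_lt (max_lt (by linarith) hxT))

lemma lamMax_sub_quadratic_eq_of_isMinOn (S T : Matrix (Fin n) (Fin n) ℝ) {v : Fin n → ℝ}
    (hv : v ⬝ᵥ v = 1)
    (hmin : IsMinOn (fun u => max (lamMax S - u ⬝ᵥ (S *ᵥ u)) (lamMax T - u ⬝ᵥ (T *ᵥ u)))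
      {u | u ⬝ᵥ u = 1} v) :
    lamMax S - v ⬝ᵥ (S *ᵥ v) = lamMax T - v ⬝ᵥ (T *ᵥ v) := by
  refine le_antisymm (lamMax_sub_quadratic_le_of_isMinOn S T hv hmin)
    (lamMax_sub_quadratic_le_of_isMinOn T S hv ?_)
  simpa only [max_comm] using hmin

end LamMax

theorem stmt10_general {a b n : ℕ} (d : ℕ)
    (Aseq : ℕ → Matrix (Fin a) (Fin n) ℝ) (Bseq : ℕ → Matrix (Fin b) (Fin n) ℝ)
    (v : ℕ → Fin n → ℝ)
    (hunit : ∀ r, 1 ≤ r → r ≤ d → v r ⬝ᵥ v r = 1)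
    (hmin : ∀ r, 1 ≤ r → r ≤ d → ∀ u : Fin n → ℝ, u ⬝ᵥ u = 1 →
      max (fairLoss (Aseq r) (v r)) (fairLoss (Bseq r) (v r)) ≤
        max (fairLoss (Aseq r) u) (fairLoss (Bseq r) u)) :
    ∑ r ∈ Finset.Icc 1 d, fairLoss (Aseq r) (v r) =
      ∑ r ∈ Finset.Icc 1 d, fairLoss (Bseq r) (v r) := by
  refine Finset.sum_congr rfl fun r hr => ?_
  obtain ⟨h1, hd⟩ := Finset.mem_Icc.1 hr
  exact lamMax_sub_quadratic_eq_of_isMinOn _ _ (hunit r h1 hd)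
    (isMinOn_iff.2 (hmin r h1 hd))

/-- equal total incremental error for two groups: with
`A⁽¹⁾ = A`, `B⁽¹⁾ = B`, `v_r` a unit minimizer of
`u ↦ max(h_{A⁽ʳ⁾}(u), h_{B⁽ʳ⁾}(u))` over the unit sphere, and
`A⁽ʳ⁺¹⁾ = A⁽ʳ⁾(I − v_r v_rᵀ)`, `B⁽ʳ⁺¹⁾ = B⁽ʳ⁾(I − v_r v_rᵀ)` for `r = 1, …, d`,
the total incremental errors of the two groups coincide. -/
theorem stmt10 {a b n : ℕ} (d : ℕ)
    (A : Matrix (Fin a) (Fin n) ℝ) (B : Matrix (Fin b) (Fin n) ℝ)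
    (Aseq : ℕ → Matrix (Fin a) (Fin n) ℝ) (Bseq : ℕ → Matrix (Fin b) (Fin n) ℝ)
    (v : ℕ → Fin n → ℝ)
    (hA1 : Aseq 1 = A) (hB1 : Bseq 1 = B)
    (hunit : ∀ r, 1 ≤ r → r ≤ d → v r ⬝ᵥ v r = 1)
    (hmin : ∀ r, 1 ≤ r → r ≤ d → ∀ u : Fin n → ℝ, u ⬝ᵥ u = 1 →
      max (fairLoss (Aseq r) (v r)) (fairLoss (Bseq r) (v r)) ≤
        max (fairLoss (Aseq r) u) (fairLoss (Bseq r) u))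
    (hArec : ∀ r, 1 ≤ r → r ≤ d →
      Aseq (r + 1) = Aseq r * (1 - Matrix.vecMulVec (v r) (v r)))
    (hBrec : ∀ r, 1 ≤ r → r ≤ d →
      Bseq (r + 1) = Bseq r * (1 - Matrix.vecMulVec (v r) (v r))) :
    ∑ r ∈ Finset.Icc 1 d, fairLoss (Aseq r) (v r) =
      ∑ r ∈ Finset.Icc 1 d, fairLoss (Bseq r) (v r) :=
  stmt10_general d Aseq Bseq v hunit hmin
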